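/- arXiv:2007.01560 — 7 statements merged into one kernel-verified Lean document; each statement's English description precedes it below -/
import Mathlib

section
/- Let S be a safe set of votes (at most f voters equivocate in S), with n voters total and f < n/3. If S has a supermajority for blocks B and B', then B and B' lie on the same chain (one is an ancestor-or-equal of the other). -/
open Set

variable {Block : Type*} [PartialOrder Block]

/-- A voter equivocates in a vote set `S` if `S` contains two distinct votes by that voter. -/
def Equivocates {n : ℕ} (S : Set (Fin n × Block)) (v : Fin n) : Prop :=
  ∃ b b' : Block, b ≠ b' ∧ (v, b) ∈ S ∧ (v, b') ∈ S

/-- The supermajority threshold: the least integer `≥ (n+f+1)/2`, i.e. `⌈(n+f+1)/2⌉`. -/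
def threshold (n f : ℕ) : ℕ := (n + f) / 2 + 1

/-- `S` has a supermajority for `B`: at least `⌈(n+f+1)/2⌉` voters either vote in `S`
for a block `≥ B` or equivocate in `S`. -/
def HasSupermajority {n : ℕ} (f : ℕ) (S : Set (Fin n × Block)) (B : Block) : Prop :=
  threshold n f ≤ {v : Fin n | (∃ b, (v, b) ∈ S ∧ B ≤ b) ∨ Equivocates S v}.ncard

/-- It is impossible for `S` to have a supermajority for `B`: at least `⌈(n+f+1)/2⌉` voters
either vote in `S` for a block not `≥ B` or equivocate in `S`. -/
def ImpossibleSupermajority {n : ℕ} (f : ℕ) (S : Set (Fin n × Block)) (B : Block) : Prop :=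
  threshold n f ≤ {v : Fin n | (∃ b, (v, b) ∈ S ∧ ¬ B ≤ b) ∨ Equivocates S v}.ncard

/-- `S` is safe if at most `f` voters equivocate in `S`. -/
def Safe {n : ℕ} (f : ℕ) (S : Set (Fin n × Block)) : Prop :=
  {v : Fin n | Equivocates S v}.ncard ≤ f

/-- `B` is the 2/3-GHOST block `g(S)`: `S` has a supermajority for `B`, and `B` dominates
every block with a supermajority in `S`. -/
def IsGhost {n : ℕ} (f : ℕ) (S : Set (Fin n × Block)) (B : Block) : Prop :=
  HasSupermajority f S B ∧ ∀ B', HasSupermajority f S B' → B' ≤ B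

/-- `c` is a child of `p` in the block tree: `p < c` with nothing strictly in between. -/
def IsChildOf (p c : Block) : Prop := p < c ∧ ¬ ∃ x, p < x ∧ x < c

/-- Blocks form a rooted tree: any two ancestors of a block are comparable
(so incomparable blocks have no common descendant). -/
def IsTree (Block : Type*) [PartialOrder Block] : Prop :=
  ∀ a b c : Block, a ≤ c → b ≤ c → a ≤ b ∨ b ≤ a

/-- in a safe vote set, any two blocks with a supermajority are on the same chain. -/
theorem supermajority_same_chain {n f : ℕ} (htree : IsTree Block)
    (hnf : 3 * f < n) (S : Set (Fin n × Block)) (hsafe : Safe f S)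
    (B B' : Block) (hB : HasSupermajority f S B) (hB' : HasSupermajority f S B') :
    B ≤ B' ∨ B' ≤ B := by
  set A : Set (Fin n) := {v : Fin n | (∃ b, (v, b) ∈ S ∧ B ≤ b) ∨ Equivocates S v} with hA
  set A' : Set (Fin n) := {v : Fin n | (∃ b, (v, b) ∈ S ∧ B' ≤ b) ∨ Equivocates S v} with hA'
  set E : Set (Fin n) := {v : Fin n | Equivocates S v} with hE
  have hfinA : A.Finite := Set.toFinite _
  have hfinA' : A'.Finite := Set.toFinite _
  have hunion : (A ∪ A').ncard ≤ n := by
    calc (A ∪ A').ncard ≤ (Set.univ : Set (Fin n)).ncard :=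
          Set.ncard_le_ncard (Set.subset_univ _) Set.finite_univ
      _ = n := by simp [Set.ncard_univ]
  have hkey : (A ∪ A').ncard + (A ∩ A').ncard = A.ncard + A'.ncard :=
    Set.ncard_union_add_ncard_inter A A' hfinA hfinA'
  have hth : n + f + 1 ≤ 2 * threshold n f := by
    unfold threshold; omega
  have hsum : n + f + 1 ≤ A.ncard + A'.ncard := by
    calc n + f + 1 ≤ 2 * threshold n f := hth
      _ ≤ A.ncard + A'.ncard := by
          have hBn : threshold n f ≤ A.ncard := hB
          have hBn' : threshold n f ≤ A'.ncard := hB'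
          omega
  have hlt : E.ncard < (A ∩ A').ncard := by
    have : E.ncard ≤ f := hsafe
    omega
  obtain ⟨v, hvmem, hvE⟩ := Set.exists_mem_notMem_of_ncard_lt_ncard hlt (Set.toFinite _)
  have hvA : v ∈ A := hvmem.1
  have hvA' : v ∈ A' := hvmem.2
  have hnE : ¬ Equivocates S v := hvE
  obtain ⟨b, hbS, hBb⟩ := hvA.resolve_right hnE
  obtain ⟨b', hbS', hBb'⟩ := hvA'.resolve_right hnE
  have hbb : b = b' := by
    by_contra h
    exact hnE ⟨b, b', h, hbS, hbS'⟩
  subst hbb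
  exact htree B B' b hBb hBb'
end

section
/- Let T be a safe set of votes with f < n/3. Then there is at most one block B of maximal height such that T has a supermajority for B; that is, the 2/3-GHOST function g(T), defined as the highest block for which T has a supermajority, is well-defined when it exists. -/
open Set

variable {Block : Type*} [PartialOrder Block]

/-- for a safe vote set there is at most one supermajority block of maximal
height, so the 2/3-GHOST function `g(T)` is well-defined when it exists. -/
theorem ghost_unique {n f : ℕ} (htree : IsTree Block)
    (height : Block → ℕ) (hheight : ∀ a b : Block, a < b → height a < height b)
    (hnf : 3 * f < n) (T : Set (Fin n × Block)) (hsafe : Safe f T)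
    (B B' : Block)
    (hB : HasSupermajority f T B) (hB' : HasSupermajority f T B')
    (hmaxB : ∀ C, HasSupermajority f T C → height C ≤ height B)
    (hmaxB' : ∀ C, HasSupermajority f T C → height C ≤ height B') :
    B = B' := by
  classical
  set A : Set (Fin n) := {v : Fin n | (∃ b, (v, b) ∈ T ∧ B ≤ b) ∨ Equivocates T v}
  set A' : Set (Fin n) := {v : Fin n | (∃ b, (v, b) ∈ T ∧ B' ≤ b) ∨ Equivocates T v}
  have hAfin : A.Finite := Set.toFinite _
  have hA'fin : A'.Finite := Set.toFinite _
  have hcard : (A ∪ A').ncard + (A ∩ A').ncard = A.ncard + A'.ncard :=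
    Set.ncard_union_add_ncard_inter A A'
  have hun : (A ∪ A').ncard ≤ n := by
    have h := Set.ncard_le_ncard (Set.subset_univ (A ∪ A')) (Set.toFinite _)
    simpa [Set.ncard_univ] using h
  have hinter : f + 1 ≤ (A ∩ A').ncard := by
    have h1 : threshold n f ≤ A.ncard := hB
    have h2 : threshold n f ≤ A'.ncard := hB'
    have ht : n + f + 1 ≤ 2 * threshold n f := by
      unfold threshold; omega
    omega
  -- find a non-equivocating voter in A ∩ A'
  have hne : ¬ (A ∩ A' ⊆ {v : Fin n | Equivocates T v}) := by
    intro hsub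
    have := Set.ncard_le_ncard hsub (Set.toFinite _)
    have := hsafe
    unfold Safe at this
    omega
  obtain ⟨v, hv, hveq⟩ := Set.not_subset.mp hne
  obtain ⟨hvA, hvA'⟩ := hv
  rcases hvA with ⟨b, hbT, hBb⟩ | h
  · rcases hvA' with ⟨b', hb'T, hB'b'⟩ | h
    · have hbb' : b = b' := by
        by_contra hne'
        exact hveq ⟨b, b', hne', hbT, hb'T⟩
      subst hbb'
      rcases htree B B' b hBb hB'b' with hle | hle
      · rcases eq_or_lt_of_le hle with h | h
        · exact h
        · exact absurd (hmaxB B' hB') (not_le.mpr (hheight _ _ h))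
      · rcases eq_or_lt_of_le hle with h | h
        · exact h.symm
        · exact absurd (hmaxB' B hB) (not_le.mpr (hheight _ _ h))
    · exact absurd h hveq
  · exact absurd h hveq
end

section
/- Let S be a set of votes with f < n/3 such that g(S) exists, and let B be a block not on the same chain as g(S) (neither is an ancestor-or-equal of the other). Then it is impossible for S to have a supermajority for B. -/
open Set

variable {Block : Type*} [PartialOrder Block]

/-- if `g(S)` exists and `B` is not on the same chain as `g(S)`, then it is
impossible for `S` to have a supermajority for `B`. -/
theorem impossible_incomparable_ghost {n f : ℕ} (htree : IsTree Block) (hnf : 3 * f < n)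
    (S : Set (Fin n × Block)) (gS : Block) (hg : IsGhost f S gS)
    (B : Block) (hinc : ¬ (B ≤ gS ∨ gS ≤ B)) :
    ImpossibleSupermajority f S B := by
  refine le_trans hg.1 (Set.ncard_le_ncard ?_ (Set.toFinite _))
  rintro v (⟨b, hb, hgb⟩ | heq)
  · exact Or.inl ⟨b, hb, fun hBb => hinc (htree B gS b hBb hgb)⟩
  · exact Or.inr heq
end

section
/- Suppose two sets S and C of precommit votes for the same round satisfy: C has a supermajority for block B, and it is impossible for S to have a supermajority for B. Then the union S ∪ C contains at least f+1 equivocating voters. -/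
open Set

variable {Block : Type*} [PartialOrder Block]

/-- if `C` has a supermajority for `B` while it is impossible for `S` to have a
supermajority for `B`, then `S ∪ C` contains at least `f+1` equivocating voters. -/
theorem equivocators_from_conflict {n f : ℕ} (hnf : 3 * f < n)
    (S C : Set (Fin n × Block)) (B : Block)
    (hC : HasSupermajority f C B) (hS : ImpossibleSupermajority f S B) :
    f + 1 ≤ {v : Fin n | Equivocates (S ∪ C) v}.ncard := by
  set A : Set (Fin n) := {v | (∃ b, (v, b) ∈ C ∧ B ≤ b) ∨ Equivocates C v} with hA
  set D : Set (Fin n) := {v | (∃ b, (v, b) ∈ S ∧ ¬ B ≤ b) ∨ Equivocates S v} with hD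
  have hsub : A ∩ D ⊆ {v : Fin n | Equivocates (S ∪ C) v} := by
    rintro v ⟨hvA, hvD⟩
    rcases hvA with ⟨b, hbC, hBb⟩ | ⟨b, b', hne, h1, h2⟩
    · rcases hvD with ⟨b', hb'S, hBb'⟩ | ⟨c, c', hne, h1, h2⟩
      · exact ⟨b, b', fun h => hBb' (h ▸ hBb), Or.inr hbC, Or.inl hb'S⟩
      · exact ⟨c, c', hne, Or.inl h1, Or.inl h2⟩
    · exact ⟨b, b', hne, Or.inr h1, Or.inr h2⟩
  have hkey : f + 1 ≤ (A ∩ D).ncard := by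
    have hfin : ∀ X : Set (Fin n), X.Finite := fun X => X.toFinite
    have h1 : A.ncard + D.ncard = (A ∩ D).ncard + (A ∪ D).ncard :=
      (Set.ncard_inter_add_ncard_union A D (hfin A) (hfin D)).symm
    have h2 : (A ∪ D).ncard ≤ n := by
      have := Set.ncard_le_ncard (Set.subset_univ (A ∪ D)) (hfin _)
      simpa [Set.ncard_univ] using this
    have hCt : threshold n f ≤ A.ncard := hC
    have hSt : threshold n f ≤ D.ncard := hS
    unfold threshold at hCt hSt
    omega
  calc f + 1 ≤ (A ∩ D).ncard := hkey
    _ ≤ _ := Set.ncard_le_ncard hsub (Set.toFinite _)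
end

section
/- If two blocks B and B' not on the same chain are each committed in the same round (i.e., there exist sets of precommit votes from that round with a supermajority for B and for B' respectively), then the union of these precommit sets contains at least f+1 equivocating voters. -/
open Set

variable {Block : Type*} [PartialOrder Block]

/-- if two blocks not on the same chain are each committed in the same round,
then the union of the two precommit sets contains at least `f+1` equivocating voters. -/
theorem equivocators_from_two_commits {n f : ℕ} (htree : IsTree Block) (hnf : 3 * f < n)
    (S S' : Set (Fin n × Block)) (B B' : Block) (hinc : ¬ (B ≤ B' ∨ B' ≤ B))
    (hB : HasSupermajority f S B) (hB' : HasSupermajority f S' B') :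
    f + 1 ≤ {v : Fin n | Equivocates (S ∪ S') v}.ncard := by
  classical
  set T : Set (Fin n) := {v : Fin n | (∃ b, (v, b) ∈ S ∧ B ≤ b) ∨ Equivocates S v} with hT
  set T' : Set (Fin n) := {v : Fin n | (∃ b, (v, b) ∈ S' ∧ B' ≤ b) ∨ Equivocates S' v} with hT'
  set E : Set (Fin n) := {v : Fin n | Equivocates (S ∪ S') v} with hE
  have hsub : T ∩ T' ⊆ E := by
    rintro v ⟨hv, hv'⟩
    rcases hv with ⟨b, hbS, hBb⟩ | ⟨b1, b2, hne, h1, h2⟩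
    · rcases hv' with ⟨b', hbS', hBb'⟩ | ⟨b1, b2, hne, h1, h2⟩
      · refine ⟨b, b', ?_, Or.inl hbS, Or.inr hbS'⟩
        rintro rfl
        exact hinc (htree B B' b hBb hBb')
      · exact ⟨b1, b2, hne, Or.inr h1, Or.inr h2⟩
    · exact ⟨b1, b2, hne, Or.inl h1, Or.inl h2⟩
  have hEfin : E.Finite := Set.toFinite E
  have hle : (T ∩ T').ncard ≤ E.ncard := Set.ncard_le_ncard hsub hEfin
  have hIE : (T ∪ T').ncard + (T ∩ T').ncard = T.ncard + T'.ncard :=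
    Set.ncard_union_add_ncard_inter T T'
  have hun : (T ∪ T').ncard ≤ n := by
    have := Set.ncard_le_ncard (Set.subset_univ (T ∪ T')) (Set.toFinite _)
    simpa [Set.ncard_univ] using this
  have hT1 : threshold n f ≤ T.ncard := hB
  have hT2 : threshold n f ≤ T'.ncard := hB'
  unfold threshold at hT1 hT2
  omega
end

section
/- Let S be a set of votes over n voters with 3f < n such that votes from at least 2f+1 voters appear in S, g(S) exists, and it is impossible for S to have a supermajority for every child of g(S) that appears on the chain of some vote in S. Then for every block B with B > g(S) (B a strict descendant of g(S)), it is impossible for S to have a supermajority for B. -/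
open Set

variable {Block : Type*} [PartialOrder Block]

/-- if `S` has votes from at least `2f+1` voters, `g(S)` exists, and a
supermajority is impossible for every child of `g(S)` on the chain of some vote in `S`,
then a supermajority for any strict descendant of `g(S)` is impossible. -/
theorem impossible_descendants {n f : ℕ} (htree : IsTree Block)
    (hchild : ∀ a b : Block, a < b → ∃ c, IsChildOf a c ∧ c ≤ b)
    (hnf : 3 * f < n)
    (S : Set (Fin n × Block))
    (hvoters : 2 * f + 1 ≤ {v : Fin n | ∃ b, (v, b) ∈ S}.ncard)
    (gS : Block) (hg : IsGhost f S gS)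
    (himp : ∀ c, IsChildOf gS c → (∃ p ∈ S, c ≤ p.2) → ImpossibleSupermajority f S c)
    (B : Block) (hB : gS < B) :
    ImpossibleSupermajority f S B := by
  obtain ⟨c, hc, hcB⟩ := hchild gS B hB
  by_cases hvote : ∃ p ∈ S, c ≤ p.2
  · have h := himp c hc hvote
    refine le_trans h (Set.ncard_le_ncard ?_ (Set.toFinite _))
    rintro v (⟨b, hb, hnb⟩ | he)
    · exact Or.inl ⟨b, hb, fun h => hnb (le_trans hcB h)⟩
    · exact Or.inr he
  · push_neg at hvote
    refine le_trans hg.1 (Set.ncard_le_ncard ?_ (Set.toFinite _))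
    rintro v (⟨b, hb, _⟩ | he)
    · exact Or.inl ⟨b, hb, fun h => hvote (v, b) hb (le_trans hcB h)⟩
    · exact Or.inr he
end

section
/- Suppose blocks B and B' are finalised with valid commit messages in rounds r and r' > r respectively (each commit containing precommits from at least n−f voters with a supermajority for the respective block), B and B' are not on the same chain, and fewer than f+1 voters equivocate in any single round's vote set. Then in some round r'' with r ≤ r'' ≤ r', at least n−f voters fail to behave as an honest voter would (either they equivocate or they cannot produce a valid response to the challenge query), hence more than f voters are Byzantine. -/
open Set

variable {Block : Type*} [PartialOrder Block]

lemma equiv_mono {n : ℕ} {S S' : Set (Fin n × Block)} (h : S ⊆ S') {v : Fin n} :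
    Equivocates S v → Equivocates S' v := by
  rintro ⟨b, b', hbb, h1, h2⟩; exact ⟨b, b', hbb, h h1, h h2⟩

lemma card_fin_le {n : ℕ} (A : Set (Fin n)) : A.ncard ≤ n := by
  calc A.ncard ≤ (Set.univ : Set (Fin n)).ncard :=
        Set.ncard_le_ncard (Set.subset_univ _) (Set.toFinite _)
    _ = n := by simp [Set.ncard_univ]

lemma imp_mono {n f : ℕ} {S S' : Set (Fin n × Block)} (h : S ⊆ S') {B : Block} :
    ImpossibleSupermajority f S B → ImpossibleSupermajority f S' B := by
  intro hi
  refine le_trans hi (Set.ncard_le_ncard ?_ (Set.toFinite _))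
  rintro v (⟨b, hb, hBb⟩ | he)
  · exact Or.inl ⟨b, h hb, hBb⟩
  · exact Or.inr (equiv_mono h he)

lemma sm_mono {n f : ℕ} {S S' : Set (Fin n × Block)} (h : S ⊆ S') {B : Block} :
    HasSupermajority f S B → HasSupermajority f S' B := by
  intro hi
  refine le_trans hi (Set.ncard_le_ncard ?_ (Set.toFinite _))
  rintro v (⟨b, hb, hBb⟩ | he)
  · exact Or.inl ⟨b, h hb, hBb⟩
  · exact Or.inr (equiv_mono h he)

lemma clash {n f : ℕ} (hnf : 3 * f < n) {S : Set (Fin n × Block)} {B : Block}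
    (h1 : HasSupermajority f S B) (h2 : ImpossibleSupermajority f S B)
    (hE : {v : Fin n | Equivocates S v}.ncard ≤ f) : False := by
  set A := {v : Fin n | (∃ b, (v, b) ∈ S ∧ B ≤ b) ∨ Equivocates S v} with hA
  set A' := {v : Fin n | (∃ b, (v, b) ∈ S ∧ ¬ B ≤ b) ∨ Equivocates S v} with hA'
  have hsub : A ∩ A' ⊆ {v : Fin n | Equivocates S v} := by
    rintro v ⟨hv, hv'⟩
    rcases hv with ⟨b, hb, hBb⟩ | he
    · rcases hv' with ⟨b', hb', hBb'⟩ | he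
      · exact ⟨b, b', fun h => hBb' (h ▸ hBb), hb, hb'⟩
      · exact he
    · exact he
  have hint : (A ∩ A').ncard ≤ f :=
    le_trans (Set.ncard_le_ncard hsub (Set.toFinite _)) hE
  have hun : (A ∪ A').ncard ≤ n := card_fin_le _
  have hsum := Set.ncard_union_add_ncard_inter A A' (Set.toFinite _) (Set.toFinite _)
  have hAle : threshold n f ≤ A.ncard := h1
  have hA'le : threshold n f ≤ A'.ncard := h2
  have ht : n + f + 1 ≤ 2 * threshold n f := by unfold threshold; omega
  omega

lemma extract_imp {n f : ℕ} (hnf : 3 * f < n) {S : Set (Fin n × Block)} {B : Block}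
    (h : ImpossibleSupermajority f S B)
    (hE : {v : Fin n | Equivocates S v}.ncard ≤ f)
    {D : Set (Fin n)} (hD : D.ncard ≤ f) :
    ∃ v, (∃ b, (v, b) ∈ S ∧ ¬ B ≤ b) ∧ v ∉ D := by
  by_contra hc
  push_neg at hc
  have hsub : {v : Fin n | (∃ b, (v, b) ∈ S ∧ ¬ B ≤ b) ∨ Equivocates S v}
      ⊆ D ∪ {v : Fin n | Equivocates S v} := by
    rintro v (hv | he)
    · exact Or.inl (hc v hv)
    · exact Or.inr he
  have := le_trans h (le_trans (Set.ncard_le_ncard hsub (Set.toFinite _))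
    (Set.ncard_union_le _ _))
  have ht : 2 * f + 1 ≤ threshold n f := by unfold threshold; omega
  omega

lemma extract_sm {n f : ℕ} (hnf : 3 * f < n) {S : Set (Fin n × Block)} {B : Block}
    (h : HasSupermajority f S B)
    (hE : {v : Fin n | Equivocates S v}.ncard ≤ f)
    {D : Set (Fin n)} (hD : D.ncard ≤ f) :
    ∃ v, (∃ b, (v, b) ∈ S ∧ B ≤ b) ∧ v ∉ D := by
  by_contra hc
  push_neg at hc
  have hsub : {v : Fin n | (∃ b, (v, b) ∈ S ∧ B ≤ b) ∨ Equivocates S v}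
      ⊆ D ∪ {v : Fin n | Equivocates S v} := by
    rintro v (hv | he)
    · exact Or.inl (hc v hv)
    · exact Or.inr he
  have := le_trans h (le_trans (Set.ncard_le_ncard hsub (Set.toFinite _))
    (Set.ncard_union_le _ _))
  have ht : 2 * f + 1 ≤ threshold n f := by unfold threshold; omega
  omega


/-- accountable safety, contrapositive form: if blocks `B` and `B'` are
committed in rounds `r < r'`, every round has at most `f` equivocators, at most `f`
voters per round fail to answer the challenge query as an honest voter could, and at
most `f` round-`r` precommitters for `B` fail to exhibit a prevote supermajority they
saw, then `B` and `B'` lie on the same chain (equivalently, if `B ≁ B'` then in some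
round at least `n-f` voters misbehave, i.e. more than `f` are Byzantine). -/
theorem accountable_safety {n f : ℕ} (htree : IsTree Block) (hnf : 3 * f < n)
    (r r' : ℕ) (hrr : r < r')
    (V C : ℕ → Set (Fin n × Block)) (B B' : Block)
    (hB : HasSupermajority f (C r) B) (hB' : HasSupermajority f (C r') B')
    -- fewer than f+1 voters equivocate in any single round's vote set
    (hequiv : ∀ k, {v : Fin n | Equivocates (V k ∪ C k) v}.ncard ≤ f)
    -- in each round r < k ≤ r', at most f voters who voted for a block not ≥ B fail to
    -- answer the challenge query with round-(k-1) votes showing impossibility for B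
    (hresp : ∀ k, r < k → k ≤ r' →
      {v : Fin n | (∃ b, ((v, b) ∈ V k ∨ (v, b) ∈ C k) ∧ ¬ B ≤ b) ∧
        ¬ ∃ T : Set (Fin n × Block), (T ⊆ V (k - 1) ∨ T ⊆ C (k - 1)) ∧
          ImpossibleSupermajority f T B}.ncard ≤ f)
    -- at most f round-r precommitters for blocks ≥ B fail to exhibit the round-r
    -- prevote supermajority they saw
    (hseen : {v : Fin n | (∃ b, (v, b) ∈ C r ∧ B ≤ b) ∧
        ¬ ∃ T : Set (Fin n × Block), T ⊆ V r ∧ HasSupermajority f T B}.ncard ≤ f) :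
    B ≤ B' ∨ B' ≤ B := by
  by_contra hcomp
  push_neg at hcomp
  obtain ⟨h1, h2⟩ := hcomp
  have hEV : ∀ k, {v : Fin n | Equivocates (V k) v}.ncard ≤ f := fun k =>
    le_trans (Set.ncard_le_ncard
      (fun v hv => equiv_mono Set.subset_union_left hv) (Set.toFinite _)) (hequiv k)
  have hEC : ∀ k, {v : Fin n | Equivocates (C k) v}.ncard ≤ f := fun k =>
    le_trans (Set.ncard_le_ncard
      (fun v hv => equiv_mono Set.subset_union_right hv) (Set.toFinite _)) (hequiv k)
  have h0 : ImpossibleSupermajority f (C r') B := by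
    refine le_trans hB' (Set.ncard_le_ncard ?_ (Set.toFinite _))
    rintro v (⟨b, hb, hBb⟩ | he)
    · refine Or.inl ⟨b, hb, fun hBle => ?_⟩
      rcases htree B B' b hBle hBb with h | h
      · exact h1 h
      · exact h2 h
    · exact Or.inr he
  have key : ∀ d k, k = r + d → k ≤ r' →
      (ImpossibleSupermajority f (V k) B ∨ ImpossibleSupermajority f (C k) B) →
      (ImpossibleSupermajority f (V r) B ∨ ImpossibleSupermajority f (C r) B) := by
    intro d
    induction d with
    | zero => intro k hk _ h; rwa [show k = r by omega] at h
    | succ d ih =>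
      intro k hk hkr' himp
      have hrk : r < k := by omega
      have step : ∃ T : Set (Fin n × Block),
          (T ⊆ V (k - 1) ∨ T ⊆ C (k - 1)) ∧ ImpossibleSupermajority f T B := by
        rcases himp with h | h
        · obtain ⟨v, ⟨b, hb, hBb⟩, hvD⟩ := extract_imp hnf h (hEV k) (hresp k hrk hkr')
          by_contra hT
          exact hvD ⟨⟨b, Or.inl hb, hBb⟩, hT⟩
        · obtain ⟨v, ⟨b, hb, hBb⟩, hvD⟩ := extract_imp hnf h (hEC k) (hresp k hrk hkr')
          by_contra hT
          exact hvD ⟨⟨b, Or.inr hb, hBb⟩, hT⟩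
      obtain ⟨T, hTsub, hTimp⟩ := step
      have hnext : ImpossibleSupermajority f (V (k - 1)) B ∨
          ImpossibleSupermajority f (C (k - 1)) B := by
        rcases hTsub with h | h
        · exact Or.inl (imp_mono h hTimp)
        · exact Or.inr (imp_mono h hTimp)
      exact ih (k - 1) (by omega) (by omega) hnext
  have hfin := key (r' - r) r' (by omega) le_rfl (Or.inr h0)
  rcases hfin with h | h
  · obtain ⟨v, ⟨b, hb, hBb⟩, hvD⟩ := extract_sm hnf hB (hEC r) hseen
    have : ∃ T : Set (Fin n × Block), T ⊆ V r ∧ HasSupermajority f T B := by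
      by_contra hT
      exact hvD ⟨⟨b, hb, hBb⟩, hT⟩
    obtain ⟨T, hTsub, hTsm⟩ := this
    exact clash hnf (sm_mono hTsub hTsm) h (hEV r)
  · exact clash hnf hB h (hEC r)
end
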